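/- arXiv:2505.05069 — 2 statements merged into one kernel-verified Lean document; each statement's English description precedes it below -/
import Mathlib

section
/- Let λ > 1 and let E : ℕ → ℝ satisfy κ₁·λⁿ ≤ E(n) ≤ κ₂·λⁿ for all n ≥ 1, with κ₁, κ₂ > 0. Define C(n) = (1/n)·∑_{d | n} μ(n/d)·E(d). Then there exists a constant σ₁ > 0 such that ∑_{n=1}^{N} C(n) ≥ σ₁·λᴺ/N for all sufficiently large N. -/
open Finset Filter ArithmeticFunction

/-! In `n C(n) = ∑_{d ∣ n} μ(n/d) E(d)` the term `d = n` contributes `E(n) ≥ κ₁ λⁿ`, while every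
other divisor satisfies `d ≤ n/2`, so the remaining terms total `O(λ^{n/2})`. Hence
`C(n) ≥ (κ₁/2) λⁿ/n` for large `n`; in particular `C` is eventually nonnegative, so the partial
sum up to `N` is at least `C(N)` minus a constant, and the constant is absorbed since
`λᴺ/N → ∞`. -/

lemma geom_sum_le_pow_div_sub_one {K : Type*} [Field K] [LinearOrder K] [IsStrictOrderedRing K]
    {x : K} (hx : 1 < x) (m : ℕ) : ∑ i ∈ range m, x ^ i ≤ x ^ m / (x - 1) := by
  rw [geom_sum_eq hx.ne']
  gcongr
  linarith

lemma Nat.le_div_two_of_mem_properDivisors {d n : ℕ} (h : d ∈ n.properDivisors) : d ≤ n / 2 := by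
  have hdvd := (Nat.mem_properDivisors.1 h).1
  rw [Nat.le_div_iff_mul_le two_pos]
  calc d * 2 ≤ d * (n / d) := Nat.mul_le_mul_left d (Nat.one_lt_div_of_mem_properDivisors h)
    _ = n := Nat.mul_div_cancel' hdvd

lemma sum_properDivisors_pow_le {x : ℝ} (hx : 1 < x) (n : ℕ) :
    ∑ d ∈ n.properDivisors, x ^ d ≤ x / (x - 1) * x ^ (n / 2) := by
  have hsub : n.properDivisors ⊆ range (n / 2 + 1) := fun d hd =>
    mem_range.2 (Nat.lt_succ_of_le (Nat.le_div_two_of_mem_properDivisors hd))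
  calc ∑ d ∈ n.properDivisors, x ^ d ≤ ∑ d ∈ range (n / 2 + 1), x ^ d :=
        sum_le_sum_of_subset_of_nonneg hsub fun _ _ _ => by positivity
    _ ≤ x ^ (n / 2 + 1) / (x - 1) := geom_sum_le_pow_div_sub_one hx _
    _ = x / (x - 1) * x ^ (n / 2) := by ring

lemma sub_sum_properDivisors_abs_le_sum_moebius_mul (f : ℕ → ℝ) {n : ℕ} (hn : n ≠ 0) :
    f n - ∑ d ∈ n.properDivisors, |f d| ≤ ∑ d ∈ n.divisors, (moebius (n / d) : ℝ) * f d := by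
  rw [← Nat.cons_self_properDivisors hn, sum_cons, Nat.div_self (Nat.pos_of_ne_zero hn),
    moebius_apply_one, Int.cast_one, one_mul, sub_eq_add_neg, ← sum_neg_distrib]
  gcongr with d
  have hμ : |(moebius (n / d) : ℝ)| ≤ 1 := by exact_mod_cast abs_moebius_le_one
  calc -|f d| ≤ -|(moebius (n / d) : ℝ) * f d| := by
        rw [abs_mul]; exact neg_le_neg (mul_le_of_le_one_left (abs_nonneg _) hμ)
    _ ≤ _ := neg_abs_le _

lemma sub_mul_pow_half_le_sum_moebius_mul {x K : ℝ} (hx : 1 < x) (hK : 0 ≤ K) {f : ℕ → ℝ}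
    (hf : ∀ d, 1 ≤ d → |f d| ≤ K * x ^ d) {n : ℕ} (hn : n ≠ 0) :
    f n - K * (x / (x - 1)) * x ^ (n / 2) ≤ ∑ d ∈ n.divisors, (moebius (n / d) : ℝ) * f d := by
  refine le_trans ?_ (sub_sum_properDivisors_abs_le_sum_moebius_mul f hn)
  gcongr
  calc ∑ d ∈ n.properDivisors, |f d| ≤ ∑ d ∈ n.properDivisors, K * x ^ d :=
        sum_le_sum fun d hd => hf d (Nat.pos_of_mem_properDivisors hd)
    _ = K * ∑ d ∈ n.properDivisors, x ^ d := (mul_sum _ _ _).symm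
    _ ≤ K * (x / (x - 1) * x ^ (n / 2)) := by gcongr; exact sum_properDivisors_pow_le hx n
    _ = K * (x / (x - 1)) * x ^ (n / 2) := by ring

lemma eventually_mul_pow_half_le {x : ℝ} (hx : 1 < x) (A : ℝ) {c : ℝ} (hc : 0 < c) :
    ∀ᶠ n : ℕ in atTop, A * x ^ (n / 2) ≤ c * x ^ n := by
  have h : Tendsto (fun n : ℕ => x ^ (n / 2)) atTop atTop :=
    (tendsto_pow_atTop_atTop_of_one_lt hx).comp (Nat.tendsto_div_const_atTop two_ne_zero)
  filter_upwards [h.eventually_ge_atTop (A / c)] with n hn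
  rw [div_le_iff₀' hc] at hn
  calc A * x ^ (n / 2) ≤ c * x ^ (n / 2) * x ^ (n / 2) := by gcongr
    _ = c * x ^ (n / 2 + n / 2) := by ring
    _ ≤ c * x ^ n := by gcongr; exacts [hx.le, by omega]

lemma tendsto_pow_div_atTop {x : ℝ} (hx : 1 < x) :
    Tendsto (fun n : ℕ => x ^ n / n) atTop atTop := by
  have h : Tendsto (fun n : ℕ => (n : ℝ) / x ^ n) atTop (nhdsWithin 0 (Set.Ioi 0)) := by
    refine tendsto_nhdsWithin_iff.2
      ⟨by simpa using tendsto_pow_const_div_const_pow_of_one_lt 1 hx, ?_⟩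
    filter_upwards [eventually_ge_atTop 1] with n hn
    exact Set.mem_Ioi.2 (div_pos (Nat.cast_pos.2 hn) (pow_pos (by linarith) n))
  exact h.inv_tendsto_nhdsGT_zero.congr fun n => inv_div _ _

lemma exists_add_le_sum_Icc_of_eventually_nonneg {α : Type*} [AddCommGroup α] [PartialOrder α]
    [IsOrderedAddMonoid α] {f : ℕ → α} (hf : ∀ᶠ n in atTop, 0 ≤ f n) :
    ∃ B, ∀ᶠ N in atTop, f N + B ≤ ∑ n ∈ Icc 1 N, f n := by
  obtain ⟨n₀, hn₀⟩ := eventually_atTop.1 hf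
  refine ⟨∑ n ∈ Ico 1 (n₀ + 1), f n, ?_⟩
  filter_upwards [eventually_ge_atTop (n₀ + 1)] with N hN
  rw [← Ico_add_one_right_eq_Icc,
    ← sum_Ico_consecutive f (by omega : 1 ≤ n₀ + 1) (by omega : n₀ + 1 ≤ N + 1), add_comm]
  gcongr
  exact single_le_sum (fun n hn => hn₀ n (by linarith [(mem_Ico.1 hn).1]))
    (mem_Ico.2 ⟨hN, N.lt_add_one⟩)

theorem stmt_3 (lam κ₁ κ₂ : ℝ) (hlam : 1 < lam) (hκ₁ : 0 < κ₁) (hκ₂ : 0 < κ₂)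
    (E : ℕ → ℝ)
    (hE : ∀ n : ℕ, 1 ≤ n → κ₁ * lam ^ n ≤ E n ∧ E n ≤ κ₂ * lam ^ n)
    (C : ℕ → ℝ)
    (hC : ∀ n : ℕ, 1 ≤ n →
      C n = (1 / (n : ℝ)) *
        ∑ d ∈ n.divisors, ((ArithmeticFunction.moebius (n / d) : ℤ) : ℝ) * E d) :
    ∃ σ₁ : ℝ, 0 < σ₁ ∧ ∃ N₁ : ℕ, ∀ N : ℕ, N₁ ≤ N →
      σ₁ * lam ^ N / N ≤ ∑ n ∈ Finset.Icc 1 N, C n := by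
  have hlam0 : 0 < lam := by linarith
  have hE_abs : ∀ d, 1 ≤ d → |E d| ≤ κ₂ * lam ^ d := fun d hd =>
    abs_le.2 ⟨by nlinarith [(hE d hd).1, pow_pos hlam0 d], (hE d hd).2⟩
  have hC_lower : ∀ᶠ n : ℕ in atTop, κ₁ / 2 * lam ^ n / n ≤ C n := by
    filter_upwards [eventually_mul_pow_half_le hlam (κ₂ * (lam / (lam - 1))) (half_pos hκ₁),
      eventually_ge_atTop 1] with n h_half hn
    rw [hC n hn, one_div_mul_eq_div]
    have h_sum := sub_mul_pow_half_le_sum_moebius_mul hlam hκ₂.le hE_abs (n := n) (by omega)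
    gcongr
    linarith [(hE n hn).1]
  obtain ⟨B, hB⟩ := exists_add_le_sum_Icc_of_eventually_nonneg (f := C)
    (hC_lower.mono fun n hn => (show 0 ≤ κ₁ / 2 * lam ^ n / n by positivity).trans hn)
  have h_large := ((tendsto_pow_div_atTop hlam).const_mul_atTop
    (by positivity : 0 < κ₁ / 4)).eventually_ge_atTop (-B)
  refine ⟨κ₁ / 4, by positivity, eventually_atTop.1 ?_⟩
  filter_upwards [hC_lower, hB, h_large] with N h_CN h_sum h_B
  rw [mul_div_assoc] at h_CN ⊢
  linarith
end

section
/- Let λ > 1 and let E : ℕ → ℝ satisfy κ₁·λⁿ ≤ E(n) ≤ κ₂·λⁿ for all n ≥ 1, with κ₁, κ₂ > 0. Define C(n) = (1/n)·∑_{d | n} μ(n/d)·E(d). Then there exists a constant σ₂ > 0 such that ∑_{n=1}^{N} C(n) ≤ σ₂·λᴺ/N for all N ≥ 1. -/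
/-!
Since `|μ| ≤ 1` and `E ≥ 0`, `C(n) ≤ (κ₂/n) ∑_{d ≤ n} λ^d = O(λⁿ/n)`. To sum these bounds, note
that `N ≤ n (N - n + 1)` for `1 ≤ n ≤ N`, so `λⁿ/n ≤ (λᴺ/N) (N - n + 1) λ^{-(N - n)}`, and the
series `∑_k (k + 1) λ^{-k} = (λ/(λ - 1))²` converges.
-/

open Finset ArithmeticFunction
open scoped ArithmeticFunction.Moebius

lemma sum_range_succ_mul_pow_le {x : ℝ} (hx₀ : 0 ≤ x) (hx₁ : x < 1) (N : ℕ) :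
    ∑ k ∈ range N, ((k : ℝ) + 1) * x ^ k ≤ 1 / (1 - x) ^ 2 := by
  have hsum : HasSum (fun k : ℕ => ((k : ℝ) + 1) * x ^ k) (1 / (1 - x) ^ 2) := by
    simpa [Nat.choose_one_right] using
      hasSum_choose_mul_geometric_of_norm_lt_one (𝕜 := ℝ) 1 (r := x)
        (by rwa [Real.norm_of_nonneg hx₀])
  exact (hsum.summable.sum_le_tsum _ fun k _ => by positivity).trans_eq hsum.tsum_eq

lemma one_div_le_sub_add_one_div {n N : ℕ} (hn : 1 ≤ n) (hnN : n ≤ N) :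
    1 / (n : ℝ) ≤ (((N - n : ℕ) : ℝ) + 1) / N := by
  have hN : N ≤ n * (N - n + 1) := by
    calc N = (N - n) + n := by omega
      _ ≤ n * (N - n) + n := Nat.add_le_add_right (Nat.le_mul_of_pos_left _ hn) n
      _ = n * (N - n + 1) := by ring
  rw [div_le_div_iff₀ (by exact_mod_cast hn) (by exact_mod_cast hn.trans hnN), one_mul, mul_comm]
  exact_mod_cast hN

lemma sum_Icc_pow_div_le {r : ℝ} (hr : 1 < r) {N : ℕ} (hN : 1 ≤ N) :
    ∑ n ∈ Icc 1 N, r ^ n / n ≤ (r / (r - 1)) ^ 2 * r ^ N / N := by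
  have hr₀ : 0 < r := by linarith
  have hterm : ∀ n ∈ Icc 1 N,
      r ^ n / n ≤ r ^ N / N * ((((N - n : ℕ) : ℝ) + 1) * r⁻¹ ^ (N - n)) := by
    intro n hn
    obtain ⟨hn₁, hnN⟩ := mem_Icc.mp hn
    have hpow : r ^ n = r ^ N * r⁻¹ ^ (N - n) := by
      rw [inv_pow, pow_sub₀ _ hr₀.ne' hnN]
      field_simp
    calc r ^ n / n = r ^ N * r⁻¹ ^ (N - n) * (1 / n) := by rw [hpow]; ring
      _ ≤ r ^ N * r⁻¹ ^ (N - n) * ((((N - n : ℕ) : ℝ) + 1) / N) :=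
          mul_le_mul_of_nonneg_left (one_div_le_sub_add_one_div hn₁ hnN) (by positivity)
      _ = _ := by ring
  have hreflect : ∑ n ∈ Icc 1 N, (((N - n : ℕ) : ℝ) + 1) * r⁻¹ ^ (N - n)
      = ∑ k ∈ range N, ((k : ℝ) + 1) * r⁻¹ ^ k := by
    have h := sum_Ico_reflect (fun k : ℕ => ((k : ℝ) + 1) * r⁻¹ ^ k) 1 (le_refl (N + 1))
    rwa [Nat.sub_self, Nat.add_sub_cancel, Ico_add_one_right_eq_Icc, ← range_eq_Ico] at h
  calc ∑ n ∈ Icc 1 N, r ^ n / n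
      ≤ r ^ N / N * ∑ k ∈ range N, ((k : ℝ) + 1) * r⁻¹ ^ k := by
        rw [← hreflect, mul_sum]; exact sum_le_sum hterm
    _ ≤ r ^ N / N * (1 / (1 - r⁻¹) ^ 2) := by
        gcongr
        exact sum_range_succ_mul_pow_le (by positivity) (inv_lt_one_of_one_lt₀ hr) N
    _ = (r / (r - 1)) ^ 2 * r ^ N / N := by
        have : r - 1 ≠ 0 := by linarith
        field_simp

lemma sum_divisors_pow_le {r : ℝ} (hr : 1 < r) (n : ℕ) :
    ∑ d ∈ n.divisors, r ^ d ≤ r ^ (n + 1) / (r - 1) := by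
  calc ∑ d ∈ n.divisors, r ^ d ≤ ∑ d ∈ range (n + 1), r ^ d :=
        sum_le_sum_of_subset_of_nonneg
          (fun d hd => mem_range.2 (Nat.lt_succ_of_le (Nat.divisor_le hd)))
          (fun d _ _ => by positivity)
    _ = (r ^ (n + 1) - 1) / (r - 1) := geom_sum_eq hr.ne' _
    _ ≤ r ^ (n + 1) / (r - 1) := by gcongr; linarith

lemma moebius_mul_le (m : ℕ) {a : ℝ} (ha : 0 ≤ a) : ((μ m : ℤ) : ℝ) * a ≤ a :=
  mul_le_of_le_one_left ha (by exact_mod_cast (le_abs_self _).trans abs_moebius_le_one)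

lemma sum_divisors_moebius_mul_le {κ r : ℝ} (hκ : 0 ≤ κ) (hr : 1 < r) {E : ℕ → ℝ}
    (hE : ∀ d, 1 ≤ d → 0 ≤ E d ∧ E d ≤ κ * r ^ d) (n : ℕ) :
    ∑ d ∈ n.divisors, ((μ (n / d) : ℤ) : ℝ) * E d ≤ κ * r ^ (n + 1) / (r - 1) := by
  calc ∑ d ∈ n.divisors, ((μ (n / d) : ℤ) : ℝ) * E d ≤ ∑ d ∈ n.divisors, κ * r ^ d :=
        sum_le_sum fun d hd =>
          have hEd := hE d (Nat.pos_of_mem_divisors hd)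
          (moebius_mul_le _ hEd.1).trans hEd.2
    _ = κ * ∑ d ∈ n.divisors, r ^ d := (mul_sum _ _ _).symm
    _ ≤ κ * (r ^ (n + 1) / (r - 1)) := by gcongr; exact sum_divisors_pow_le hr n
    _ = κ * r ^ (n + 1) / (r - 1) := (mul_div_assoc _ _ _).symm

theorem stmt_4 (lam κ₁ κ₂ : ℝ) (hlam : 1 < lam) (hκ₁ : 0 < κ₁) (hκ₂ : 0 < κ₂)
    (E : ℕ → ℝ)
    (hE : ∀ n : ℕ, 1 ≤ n → κ₁ * lam ^ n ≤ E n ∧ E n ≤ κ₂ * lam ^ n)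
    (C : ℕ → ℝ)
    (hC : ∀ n : ℕ, 1 ≤ n →
      C n = (1 / (n : ℝ)) *
        ∑ d ∈ n.divisors, ((ArithmeticFunction.moebius (n / d) : ℤ) : ℝ) * E d) :
    ∃ σ₂ : ℝ, 0 < σ₂ ∧ ∀ N : ℕ, 1 ≤ N →
      ∑ n ∈ Finset.Icc 1 N, C n ≤ σ₂ * lam ^ N / N := by
  set K := κ₂ * lam / (lam - 1)
  have hE₀ : ∀ d, 1 ≤ d → 0 ≤ E d ∧ E d ≤ κ₂ * lam ^ d := fun d hd =>
    ⟨(by positivity : 0 ≤ κ₁ * lam ^ d).trans (hE d hd).1, (hE d hd).2⟩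
  have hCle : ∀ n, 1 ≤ n → C n ≤ K * (lam ^ n / n) := by
    intro n hn
    rw [hC n hn]
    calc _ ≤ 1 / (n : ℝ) * (κ₂ * lam ^ (n + 1) / (lam - 1)) := by
          gcongr; exact sum_divisors_moebius_mul_le hκ₂.le hlam hE₀ n
      _ = K * (lam ^ n / n) := by ring
  refine ⟨K * (lam / (lam - 1)) ^ 2, by positivity, fun N hN => ?_⟩
  calc ∑ n ∈ Icc 1 N, C n ≤ ∑ n ∈ Icc 1 N, K * (lam ^ n / n) :=
        sum_le_sum fun n hn => hCle n (mem_Icc.mp hn).1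
    _ = K * ∑ n ∈ Icc 1 N, lam ^ n / n := (mul_sum _ _ _).symm
    _ ≤ K * ((lam / (lam - 1)) ^ 2 * lam ^ N / N) := by
        gcongr; exact sum_Icc_pow_div_le hlam hN
    _ = K * (lam / (lam - 1)) ^ 2 * lam ^ N / N := by ring
end
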